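/- arXiv:2212.06634 — 5 statements merged into one kernel-verified Lean document; each statement's English description precedes it below -/
import Mathlib

section
/- Let T be a semistandard skew tableau satisfying the lattice property. If the boxes of T contain a full axis-aligned rectangle of height h and width n (i.e. h consecutive rows each containing n boxes in the same n consecutive columns), then the content partition ν of T has at least h parts of size ≥ n, i.e. γ_n(T) ≥ h. -/
/-- A skew tableau: a skew Young diagram `λ/μ` (rows indexed from `0`, row `i`
occupying the columns `μ i ≤ j < λ i`) together with a positive integer entry in
each box. -/
structure SkewTableau where
  /-- the outer partition -/
  lam : ℕ → ℕ
  /-- the inner partition -/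
  mu : ℕ → ℕ
  /-- the entry in row `i`, column `j` -/
  entry : ℕ → ℕ → ℕ
  lam_antitone : Antitone lam
  mu_antitone : Antitone mu
  mu_le : ∀ i, mu i ≤ lam i
  support_finite : ∃ N, ∀ i, N ≤ i → lam i = 0
  entry_pos : ∀ i j, mu i ≤ j → j < lam i → 0 < entry i j

namespace SkewTableau

/-- `(i,j)` is a box of the skew diagram. -/
def Box (T : SkewTableau) (i j : ℕ) : Prop := T.mu i ≤ j ∧ j < T.lam i

/-- Semistandard: rows weakly increase left-to-right, columns strictly increase
top-to-bottom. -/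
def Semistandard (T : SkewTableau) : Prop :=
  (∀ i j j', T.Box i j → T.Box i j' → j ≤ j' → T.entry i j ≤ T.entry i j') ∧
  (∀ i j, T.Box i j → T.Box (i + 1) j → T.entry i j < T.entry (i + 1) j)

/-- The number of boxes weakly preceding `(i,j)` in the right-to-left, top-to-bottom
reading order (including `(i,j)` itself) whose entry equals `v`. -/
noncomputable def prefixCount (T : SkewTableau) (i j v : ℕ) : ℕ :=
  Set.ncard {q : ℕ × ℕ | T.Box q.1 q.2 ∧ (q.1 < i ∨ (q.1 = i ∧ j ≤ q.2)) ∧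
    T.entry q.1 q.2 = v}

/-- The lattice property: in every prefix of the reading word there are at least as
many `v`'s as `(v+1)`'s, for every `v ≥ 1`. -/
def LatticeProperty (T : SkewTableau) : Prop :=
  ∀ i j v, T.Box i j → T.prefixCount i j (v + 2) ≤ T.prefixCount i j (v + 1)

/-- The number of boxes of `T` carrying the entry `v`. -/
noncomputable def count (T : SkewTableau) (v : ℕ) : ℕ :=
  Set.ncard {q : ℕ × ℕ | T.Box q.1 q.2 ∧ T.entry q.1 q.2 = v}

/-- `γ_n(T)`: the number of parts of the content partition of `T` of size at least
`n`, i.e. the number of values `v ≥ 1` occurring at least `n` times in `T`. -/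
noncomputable def gamma (T : SkewTableau) (n : ℕ) : ℕ :=
  Set.ncard {v : ℕ | 1 ≤ v ∧ n ≤ T.count v}

end SkewTableau

open SkewTableau

namespace SkewProofAux

open SkewTableau

/-- The set of all boxes of `T` is finite. -/
theorem boxSet_finite (T : SkewTableau) : {q : ℕ × ℕ | T.Box q.1 q.2}.Finite := by
  obtain ⟨N, hN⟩ := T.support_finite
  apply Set.Finite.subset ((Set.finite_Iio N).prod (Set.finite_Iio (T.lam 0)))
  rintro ⟨i, j⟩ ⟨hmu, hlam⟩
  refine ⟨?_, ?_⟩ <;> simp only [Set.mem_Iio]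
  · by_contra hc
    push_neg at hc
    rw [hN i hc] at hlam
    omega
  · exact lt_of_lt_of_le hlam (T.lam_antitone (Nat.zero_le i))

/-- Boxes in rows `< i` carrying entry `v`. -/
def Cset (T : SkewTableau) (i v : ℕ) : Set (ℕ × ℕ) :=
  {q | T.Box q.1 q.2 ∧ q.1 < i ∧ T.entry q.1 q.2 = v}

noncomputable def C (T : SkewTableau) (i v : ℕ) : ℕ := (Cset T i v).ncard

/-- Boxes in row `i` carrying entry `v`. -/
def rowSet (T : SkewTableau) (i v : ℕ) : Set (ℕ × ℕ) :=
  {q | T.Box q.1 q.2 ∧ q.1 = i ∧ T.entry q.1 q.2 = v}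

noncomputable def rowC (T : SkewTableau) (i v : ℕ) : ℕ := (rowSet T i v).ncard

theorem Cset_finite (T : SkewTableau) (i v : ℕ) : (Cset T i v).Finite :=
  (boxSet_finite T).subset (fun q hq => hq.1)

theorem rowSet_finite (T : SkewTableau) (i v : ℕ) : (rowSet T i v).Finite :=
  (boxSet_finite T).subset (fun q hq => hq.1)

theorem C_succ (T : SkewTableau) (i v : ℕ) :
    C T (i + 1) v = C T i v + rowC T i v := by
  have hset : Cset T (i + 1) v = Cset T i v ∪ rowSet T i v := by
    ext q
    simp only [Cset, rowSet, Set.mem_setOf_eq, Set.mem_union]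
    constructor
    · rintro ⟨hb, hi, he⟩
      rcases Nat.lt_succ_iff_lt_or_eq.1 hi with h | h
      · exact Or.inl ⟨hb, h, he⟩
      · exact Or.inr ⟨hb, h, he⟩
    · rintro (⟨hb, hi, he⟩ | ⟨hb, hi, he⟩)
      · exact ⟨hb, Nat.lt_succ_of_lt hi, he⟩
      · exact ⟨hb, by omega, he⟩
  rw [C, hset, Set.ncard_union_eq ?_ (Cset_finite T i v) (rowSet_finite T i v)]
  · rfl
  · rw [Set.disjoint_left]
    rintro q ⟨_, hi, _⟩ ⟨_, hi', _⟩
    omega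

theorem C_mono_row (T : SkewTableau) {i i' : ℕ} (hii : i ≤ i') (v : ℕ) :
    C T i v ≤ C T i' v :=
  Set.ncard_le_ncard (fun q hq => ⟨hq.1, lt_of_lt_of_le hq.2.1 hii, hq.2.2⟩)
    (Cset_finite T i' v)

theorem C_le_count (T : SkewTableau) (i v : ℕ) : C T i v ≤ T.count v :=
  Set.ncard_le_ncard (fun q hq => ⟨hq.1, hq.2.2⟩)
    ((boxSet_finite T).subset (fun q hq => hq.1))

/-- Box rows are bounded. -/
theorem row_lt_of_box (T : SkewTableau) {N : ℕ} (hN : ∀ i, N ≤ i → T.lam i = 0)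
    {i j : ℕ} (hb : T.Box i j) : i < N := by
  by_contra hc
  push_neg at hc
  have := hN i hc
  have := hb.2
  omega

theorem count_eq_C (T : SkewTableau) {N : ℕ} (hN : ∀ i, N ≤ i → T.lam i = 0)
    {M : ℕ} (hNM : N ≤ M) (v : ℕ) : T.count v = C T M v := by
  unfold SkewTableau.count C Cset
  congr 1
  ext q
  simp only [Set.mem_setOf_eq]
  exact ⟨fun hq => ⟨hq.1, lt_of_lt_of_le (row_lt_of_box T hN hq.1) hNM, hq.2⟩,
    fun hq => ⟨hq.1, hq.2.2⟩⟩

/-- Key lattice lemma: the number of `v+1`'s in rows `< i+1` is at most the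
number of `v`'s in rows `< i`, for `v ≥ 1`. -/
theorem keyA (T : SkewTableau) (hss : T.Semistandard) (hlp : T.LatticeProperty)
    (i v : ℕ) (hv : 1 ≤ v) : C T (i + 1) (v + 1) ≤ C T i v := by
  by_cases hS : Cset T (i + 1) (v + 1) = ∅
  · simp [C, hS]
  have hfin := Cset_finite T (i + 1) (v + 1)
  have hFne : hfin.toFinset.Nonempty := by
    rw [Set.Finite.toFinset_nonempty]
    exact Set.nonempty_iff_ne_empty.2 hS
  set F := hfin.toFinset with hF
  -- take the maximal row i' containing a v+1 (within rows < i+1)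
  set i' := (F.image Prod.fst).max' (hFne.image _) with hi'def
  have hle_i' : ∀ q ∈ F, q.1 ≤ i' := fun q hq =>
    Finset.le_max' _ _ (Finset.mem_image_of_mem _ hq)
  obtain ⟨q0, hq0F, hq0⟩ := Finset.mem_image.1 ((F.image Prod.fst).max'_mem (hFne.image _))
  have hq0i : q0.1 = i' := hq0
  have hi'le : i' ≤ i := by
    have hmem : q0 ∈ Cset T (i + 1) (v + 1) := hfin.mem_toFinset.1 hq0F
    have h2 := hmem.2.1
    omega
  -- take the minimal column j' in row i' containing a v+1
  set F2 := F.filter (fun q => q.1 = i') with hF2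
  have hF2ne : F2.Nonempty := ⟨q0, Finset.mem_filter.2 ⟨hq0F, hq0i⟩⟩
  set j' := (F2.image Prod.snd).min' (hF2ne.image _) with hj'def
  have hle_j' : ∀ q ∈ F2, j' ≤ q.2 := fun q hq =>
    Finset.min'_le _ _ (Finset.mem_image_of_mem _ hq)
  obtain ⟨q1, hq1F2, hq1⟩ := Finset.mem_image.1 ((F2.image Prod.snd).min'_mem (hF2ne.image _))
  have hq1F : q1 ∈ F := (Finset.mem_filter.1 hq1F2).1
  have hq1i : q1.1 = i' := (Finset.mem_filter.1 hq1F2).2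
  have hq1mem : q1 ∈ Cset T (i + 1) (v + 1) := hfin.mem_toFinset.1 hq1F
  have hq1j : q1.2 = j' := hq1
  have hbox : T.Box i' j' := by rw [← hq1i, ← hq1j]; exact hq1mem.1
  have hentry : T.entry i' j' = v + 1 := by rw [← hq1i, ← hq1j]; exact hq1mem.2.2
  -- step 1 : C (i+1) (v+1) ≤ prefixCount i' j' (v+1)
  have step1 : C T (i + 1) (v + 1) ≤ T.prefixCount i' j' (v + 1) := by
    apply Set.ncard_le_ncard ?_ ((boxSet_finite T).subset (fun q hq => hq.1))
    rintro q ⟨hb, hlt, he⟩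
    refine ⟨hb, ?_, he⟩
    have hqF : q ∈ F := hfin.mem_toFinset.2 ⟨hb, hlt, he⟩
    rcases lt_or_eq_of_le (hle_i' q hqF) with hc | hc
    · exact Or.inl hc
    · exact Or.inr ⟨hc, hle_j' q (Finset.mem_filter.2 ⟨hqF, hc⟩)⟩
  -- step 2 : lattice property
  obtain ⟨w, rfl⟩ : ∃ w, v = w + 1 := ⟨v - 1, by omega⟩
  have step2 : T.prefixCount i' j' (w + 1 + 1) ≤ T.prefixCount i' j' (w + 1) :=
    hlp i' j' w hbox
  -- step 3 : prefixCount i' j' v ≤ C i v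
  have step3 : T.prefixCount i' j' (w + 1) ≤ C T i (w + 1) := by
    apply Set.ncard_le_ncard ?_ (Cset_finite T i (w + 1))
    rintro q ⟨hb, hor, he⟩
    rcases hor with hc | ⟨hc, hcj⟩
    · exact ⟨hb, lt_of_lt_of_le hc hi'le, he⟩
    · exfalso
      have hbq : T.Box i' q.2 := by rw [← hc]; exact hb
      have := hss.1 i' j' q.2 hbox hbq hcj
      rw [hentry] at this
      rw [hc] at he
      omega
  exact le_trans step1 (le_trans step2 step3)

theorem C_eq_zero (T : SkewTableau) (hss : T.Semistandard) (hlp : T.LatticeProperty) :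
    ∀ i v, i + 1 ≤ v → C T i v = 0 := by
  intro i
  induction i with
  | zero =>
    intro v _
    have : Cset T 0 v = ∅ := by
      ext q; simp only [Cset, Set.mem_setOf_eq, Set.mem_empty_iff_false, iff_false]
      rintro ⟨_, h, _⟩; omega
    simp [C, this]
  | succ i ih =>
    intro v hv
    obtain ⟨w, rfl⟩ : ∃ w, v = w + 1 := ⟨v - 1, by omega⟩
    have h1 : C T (i + 1) (w + 1) ≤ C T i w := keyA T hss hlp i w (by omega)
    have h2 : C T i w = 0 := ih w (by omega)
    omega

theorem count_zero_of_large (T : SkewTableau) (hss : T.Semistandard)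
    (hlp : T.LatticeProperty) {N : ℕ} (hN : ∀ i, N ≤ i → T.lam i = 0)
    {v : ℕ} (hv : N + 1 ≤ v) : T.count v = 0 := by
  rw [count_eq_C T hN (le_refl N) v]
  exact C_eq_zero T hss hlp N v hv

theorem count_anti (T : SkewTableau) (hss : T.Semistandard) (hlp : T.LatticeProperty)
    {a b : ℕ} (ha : 1 ≤ a) (hab : a ≤ b) : T.count b ≤ T.count a := by
  obtain ⟨N, hN⟩ := T.support_finite
  induction b with
  | zero => omega
  | succ b ih =>
    rcases Nat.lt_or_ge a (b + 1) with hlt | hge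
    · have hab' : a ≤ b := by omega
      have h1 : T.count (b + 1) ≤ T.count b := by
        rw [count_eq_C T hN (Nat.le_succ N) (b + 1)]
        calc C T (N + 1) (b + 1) ≤ C T N b := keyA T hss hlp N b (by omega)
          _ ≤ T.count b := C_le_count T N b
      exact le_trans h1 (ih hab')
    · have : a = b + 1 := by omega
      rw [this]

end SkewProofAux

open SkewProofAux in
/-- If a semistandard skew tableau with the lattice property contains a full `h × n`
rectangle of boxes, then its content has at least `h` parts of size `≥ n`. -/
theorem stmt_4 (T : SkewTableau) (hss : T.Semistandard) (hlp : T.LatticeProperty)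
    (h n r0 c0 : ℕ) (hh : 0 < h) (hn : 0 < n)
    (hrect : ∀ i j, r0 ≤ i → i < r0 + h → c0 ≤ j → j < c0 + n → T.Box i j) :
    h ≤ T.gamma n := by
  classical
  obtain ⟨h', rfl⟩ : ∃ h', h = h' + 1 := ⟨h - 1, by omega⟩
  -- lower bound on entries in the rectangle
  have hlb : ∀ k, k ≤ h' → ∀ c, c0 ≤ c → c < c0 + n → k + 1 ≤ T.entry (r0 + k) c := by
    intro k
    induction k with
    | zero =>
      intro _ c hc1 hc2
      have hb := hrect r0 c (le_refl _) (by omega) hc1 hc2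
      simpa using Nat.succ_le_of_lt (T.entry_pos r0 c hb.1 hb.2)
    | succ k ih =>
      intro hk c hc1 hc2
      have hb1 := hrect (r0 + k) c (by omega) (by omega) hc1 hc2
      have hb2 : T.Box (r0 + k + 1) c := hrect (r0 + k + 1) c (by omega) (by omega) hc1 hc2
      have hst := hss.2 (r0 + k) c hb1 hb2
      have hik := ih (by omega) c hc1 hc2
      show k + 1 + 1 ≤ T.entry (r0 + k + 1) c
      omega
  set R := r0 + h' with hR
  have hboxR : ∀ c, c0 ≤ c → c < c0 + n → T.Box R c := fun c hc1 hc2 =>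
    hrect R c (by omega) (by omega) hc1 hc2
  -- upper bound on entries in row R of the rectangle
  set W := T.entry R (c0 + n - 1) with hW
  have hub : ∀ c, c0 ≤ c → c < c0 + n → T.entry R c ≤ W := by
    intro c hc1 hc2
    exact hss.1 R c (c0 + n - 1) (hboxR c hc1 hc2)
      (hboxR (c0 + n - 1) (by omega) (by omega)) (by omega)
  -- counting columns of the rectangle whose bottom entry equals w
  have hfilter_le : ∀ w, ((Finset.Ico c0 (c0 + n)).filter
      (fun c => T.entry R c = w)).card ≤ rowC T R w := by
    intro w
    have hinj : Function.Injective (fun c : ℕ => (R, c)) := by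
      intro a b hab
      simpa using hab
    rw [← Finset.card_image_of_injective _ hinj, ← Set.ncard_coe_finset]
    apply Set.ncard_le_ncard ?_ (rowSet_finite T R w)
    intro q hq
    simp only [Finset.coe_image, Set.mem_image, Finset.mem_coe, Finset.mem_filter,
      Finset.mem_Ico] at hq
    obtain ⟨c, ⟨⟨hc1, hc2⟩, he⟩, rfl⟩ := hq
    exact ⟨hboxR c hc1 hc2, rfl, he⟩
  -- main downward induction
  have hQ : ∀ d w, h' + 1 ≤ w → W + 1 ≤ w + d →
      ((Finset.Ico c0 (c0 + n)).filter (fun c => w ≤ T.entry R c)).card ≤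
        C T (R + 1) w := by
    intro d
    induction d with
    | zero =>
      intro w hw hWd
      have hempty : (Finset.Ico c0 (c0 + n)).filter (fun c => w ≤ T.entry R c) = ∅ := by
        rw [Finset.filter_eq_empty_iff]
        intro c hc
        simp only [Finset.mem_Ico] at hc
        have := hub c hc.1 hc.2
        omega
      simp [hempty]
    | succ d ih =>
      intro w hw hWd
      have hstep : ((Finset.Ico c0 (c0 + n)).filter (fun c => w ≤ T.entry R c)).card ≤
          ((Finset.Ico c0 (c0 + n)).filter (fun c => w + 1 ≤ T.entry R c)).card +
          ((Finset.Ico c0 (c0 + n)).filter (fun c => T.entry R c = w)).card := by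
        calc ((Finset.Ico c0 (c0 + n)).filter (fun c => w ≤ T.entry R c)).card
            ≤ (((Finset.Ico c0 (c0 + n)).filter (fun c => w + 1 ≤ T.entry R c)) ∪
              ((Finset.Ico c0 (c0 + n)).filter (fun c => T.entry R c = w))).card := by
              apply Finset.card_le_card
              intro c hc
              simp only [Finset.mem_filter, Finset.mem_union, Finset.mem_Ico] at hc ⊢
              omega
          _ ≤ _ := Finset.card_union_le _ _
      have h1 := ih (w + 1) (by omega) (by omega)
      have h2 := hfilter_le w
      have h3 : C T (R + 1) (w + 1) ≤ C T R w := keyA T hss hlp R w (by omega)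
      have h4 : C T (R + 1) w = C T R w + rowC T R w := C_succ T R w
      omega
  -- the bottom row of the rectangle consists of entries ≥ h'+1
  have hfull : (Finset.Ico c0 (c0 + n)).filter (fun c => h' + 1 ≤ T.entry R c) =
      Finset.Ico c0 (c0 + n) := by
    apply Finset.filter_true_of_mem
    intro c hc
    simp only [Finset.mem_Ico] at hc
    exact hlb h' (le_refl _) c hc.1 hc.2
  have hcount : n ≤ T.count (h' + 1) := by
    have := hQ (W + 1) (h' + 1) (le_refl _) (by omega)
    rw [hfull] at this
    simp only [Nat.card_Ico] at this
    have h5 := C_le_count T (R + 1) (h' + 1)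
    omega
  -- conclude
  obtain ⟨N, hN⟩ := T.support_finite
  have hsub : Set.Icc 1 (h' + 1) ⊆ {v : ℕ | 1 ≤ v ∧ n ≤ T.count v} := by
    rintro v ⟨hv1, hv2⟩
    exact ⟨hv1, le_trans hcount (count_anti T hss hlp hv1 hv2)⟩
  have hfin : {v : ℕ | 1 ≤ v ∧ n ≤ T.count v}.Finite := by
    apply (Set.finite_Icc 1 N).subset
    rintro v ⟨hv1, hv2⟩
    refine ⟨hv1, ?_⟩
    by_contra hc
    push_neg at hc
    rw [count_zero_of_large T hss hlp hN (by omega)] at hv2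
    omega
  have hIcc : (Set.Icc 1 (h' + 1) : Set ℕ).ncard = h' + 1 := by
    rw [← Finset.coe_Icc, Set.ncard_coe_finset, Nat.card_Icc]
    omega
  calc h' + 1 = (Set.Icc 1 (h' + 1) : Set ℕ).ncard := hIcc.symm
    _ ≤ T.gamma n := Set.ncard_le_ncard hsub hfin
end

section
/- Let T be a semistandard skew tableau with ℓ columns satisfying the lattice property, and let c, h, n be positive integers. If the leftmost ℓ − n columns of T only contain boxes in rows c+1 through c+h, then the content of T has at most h parts of size ≥ n+1, i.e. γ_{n+1}(T) ≤ h. -/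
namespace SkewTableau

lemma boxes_finite (T : SkewTableau) : {q : ℕ × ℕ | T.Box q.1 q.2}.Finite := by
  obtain ⟨N, hN⟩ := T.support_finite
  apply Set.Finite.subset ((Set.finite_Iio N).prod (Set.finite_Iio (T.lam 0)))
  rintro ⟨i, j⟩ hq
  obtain ⟨h1, h2⟩ : T.mu i ≤ j ∧ j < T.lam i := hq
  refine ⟨?_, ?_⟩
  · simp only [Set.mem_Iio]
    by_contra hi
    push_neg at hi
    have := hN i hi
    omega
  · simp only [Set.mem_Iio]
    exact lt_of_lt_of_le h2 (T.lam_antitone (Nat.zero_le i))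

lemma col_chain (T : SkewTableau) (hss : T.Semistandard) :
    ∀ k i j, T.Box i j → T.Box (i + k) j → T.entry i j + k ≤ T.entry (i + k) j := by
  intro k
  induction k with
  | zero => intro i j _ _; simp
  | succ k ih =>
    intro i j hb hb'
    have hbk : T.Box (i + k) j :=
      ⟨le_trans (T.mu_antitone (Nat.le_add_right i k)) hb.1,
        lt_of_lt_of_le hb'.2 (T.lam_antitone (by omega))⟩
    have h1 := ih i j hb hbk
    have h2 := hss.2 (i + k) j hbk hb'
    have h3 : i + (k + 1) = i + k + 1 := rfl
    rw [h3]
    omega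

lemma strip (T : SkewTableau) (hss : T.Semistandard) {i j i' j' : ℕ}
    (hb : T.Box i j) (hb' : T.Box i' j') (he : T.entry i j = T.entry i' j')
    (hii' : i < i') : j' < j := by
  by_contra hjj
  push_neg at hjj
  have hbox : T.Box i j' := ⟨le_trans hb.1 hjj, lt_of_lt_of_le hb'.2 (T.lam_antitone hii'.le)⟩
  have h1 := hss.1 i j j' hb hbox hjj
  have h2 := col_chain T hss (i' - i) i j' hbox (by rw [Nat.add_sub_cancel' hii'.le]; exact hb')
  rw [Nat.add_sub_cancel' hii'.le] at h2
  omega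

end SkewTableau

open SkewTableau

/-- If a semistandard skew tableau `T` with `ℓ` columns satisfying the lattice property
is such that its leftmost `ℓ − n` columns only contain boxes in rows `c+1` through
`c+h` (1-indexed; here rows are 0-indexed so these are the rows `c ≤ i < c + h`), then
the content of `T` has at most `h` parts of size `≥ n+1`. -/
theorem stmt_5 (T : SkewTableau) (hss : T.Semistandard) (hlp : T.LatticeProperty)
    (ℓ c h n : ℕ) (hc : 0 < c) (hh : 0 < h) (hn : 0 < n)
    (hcols : ∀ i, T.lam i ≤ ℓ)
    (hleft : ∀ i j, T.Box i j → j < ℓ - n → c ≤ i ∧ i < c + h) :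
    T.gamma (n + 1) ≤ h := by
  classical
  obtain ⟨N, hN⟩ := T.support_finite
  -- the set of occurrences of a value v
  let S : ℕ → Set (ℕ × ℕ) := fun v => {q : ℕ × ℕ | T.Box q.1 q.2 ∧ T.entry q.1 q.2 = v}
  have hcount : ∀ v, T.count v = (S v).ncard := fun v => rfl
  have hfin : ∀ v, (S v).Finite := fun v => (T.boxes_finite).subset (fun q hq => hq.1)
  have hrowN : ∀ v q, q ∈ S v → q.1 ≤ N := by
    intro v q hq
    by_contra hi
    push_neg at hi
    have h0 := hN q.1 (le_of_lt hi)
    have h2 := hq.1.2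
    omega
  -- P v i : value v occurs at least n+1 times in rows ≤ i ; r v : least such row
  let P : ℕ → ℕ → Prop := fun v i => n + 1 ≤ (S v ∩ {q | q.1 ≤ i}).ncard
  let r : ℕ → ℕ := fun v => sInf {i | P v i}
  have hPN : ∀ v, n + 1 ≤ T.count v → P v N := by
    intro v hv
    have heq : S v ∩ {q : ℕ × ℕ | q.1 ≤ N} = S v :=
      Set.inter_eq_self_of_subset_left (fun q hq => hrowN v q hq)
    show n + 1 ≤ (S v ∩ {q : ℕ × ℕ | q.1 ≤ N}).ncard
    rw [heq]
    exact le_trans hv (le_of_eq (hcount v))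
  have hrmem : ∀ v, n + 1 ≤ T.count v → P v (r v) := fun v hv =>
    Nat.sInf_mem (⟨N, hPN v hv⟩ : {i | P v i}.Nonempty)
  have hrmin : ∀ v k, k < r v → ¬ P v k := fun v k hk hmem =>
    Nat.notMem_of_lt_sInf (s := {i | P v i}) hk hmem
  -- key: the (n+1)-th occurrence of w sits in the left region
  have key : ∀ w, n + 1 ≤ T.count w →
      ∃ j₀, (r w, j₀) ∈ S w ∧ (∀ j, (r w, j) ∈ S w → j₀ ≤ j) ∧
        c ≤ r w ∧ r w < c + h := by
    intro w hw
    have hAcard : n + 1 ≤ (S w ∩ {q | q.1 ≤ r w}).ncard := hrmem w hw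
    have hAfin : (S w ∩ {q | q.1 ≤ r w}).Finite := (hfin w).inter_of_left _
    -- there is an occurrence at row exactly r w
    have hex : ∃ j, (r w, j) ∈ S w := by
      by_contra hno
      push_neg at hno
      have hrowlt : ∀ q ∈ S w ∩ {q : ℕ × ℕ | q.1 ≤ r w}, q.1 < r w := by
        rintro q ⟨hq1, hq2⟩
        have hq2' : q.1 ≤ r w := hq2
        rcases lt_or_eq_of_le hq2' with hlt | heq
        · exact hlt
        · exact absurd (show (r w, q.2) ∈ S w by rw [← heq]; exact hq1) (hno q.2)
      rcases Nat.eq_zero_or_pos (r w) with h0 | hpos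
      · have hne : (S w ∩ {q : ℕ × ℕ | q.1 ≤ r w}).Nonempty :=
          Set.nonempty_of_ncard_ne_zero (by omega)
        obtain ⟨q, hq⟩ := hne
        have := hrowlt q hq
        omega
      · have hsub : S w ∩ {q : ℕ × ℕ | q.1 ≤ r w} ⊆ S w ∩ {q : ℕ × ℕ | q.1 ≤ r w - 1} := by
          rintro q hq
          refine ⟨hq.1, ?_⟩
          have := hrowlt q hq
          show q.1 ≤ r w - 1
          omega
        have hle := Set.ncard_le_ncard hsub ((hfin w).inter_of_left _)
        exact hrmin w (r w - 1) (by omega) (le_trans hAcard hle)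
    -- minimal column occurrence at row r w
    have hjne : {j | (r w, j) ∈ S w}.Nonempty := hex
    set j₀ := sInf {j | (r w, j) ∈ S w} with hj0def
    have hj0mem : (r w, j₀) ∈ S w := Nat.sInf_mem hjne
    have hj0min : ∀ j, (r w, j) ∈ S w → j₀ ≤ j := fun j hj => Nat.sInf_le hj
    -- all other occurrences in rows ≤ r w have column > j₀
    have hgt : ∀ q ∈ S w ∩ {q : ℕ × ℕ | q.1 ≤ r w}, q ≠ (r w, j₀) → j₀ < q.2 := by
      rintro q ⟨hq1, hq2⟩ hne
      have hq2' : q.1 ≤ r w := hq2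
      rcases lt_or_eq_of_le hq2' with hlt | heq
      · exact T.strip hss hq1.1 hj0mem.1 (hq1.2.trans hj0mem.2.symm) hlt
      · have hmem2 : (r w, q.2) ∈ S w := by rw [← heq]; exact hq1
        have hle := hj0min q.2 hmem2
        rcases lt_or_eq_of_le hle with h' | h'
        · exact h'
        · exact absurd (Prod.ext heq h'.symm) hne
    -- occurrences have pairwise distinct columns
    have hcolinj : ∀ q ∈ S w, ∀ q' ∈ S w, q.2 = q'.2 → q = q' := by
      intro q hq q' hq' hcc
      rcases lt_trichotomy q.1 q'.1 with hlt | heq | hgt'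
      · have := T.strip hss hq.1 hq'.1 (hq.2.trans hq'.2.symm) hlt
        omega
      · exact Prod.ext heq hcc
      · have := T.strip hss hq'.1 hq.1 (hq'.2.trans hq.2.symm) hgt'
        omega
    -- counting columns: j₀ < ℓ - n
    have hpt : (r w, j₀) ∈ S w ∩ {q : ℕ × ℕ | q.1 ≤ r w} := ⟨hj0mem, by simp⟩
    set B := (S w ∩ {q : ℕ × ℕ | q.1 ≤ r w}) \ {(r w, j₀)} with hBdef
    have hBfin : B.Finite := hAfin.diff
    have hBcard : n ≤ B.ncard := by
      rw [hBdef]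
      have := Set.ncard_diff_singleton_add_one hpt hAfin
      omega
    have hinj : Set.InjOn Prod.snd B := by
      intro q hq q' hq' hcc
      exact hcolinj q hq.1.1 q' hq'.1.1 hcc
    have himg : Prod.snd '' B ⊆ Set.Ico (j₀ + 1) ℓ := by
      rintro x ⟨q, hq, rfl⟩
      have h1 : j₀ < q.2 := hgt q hq.1 (by simpa using hq.2)
      have h2 : q.2 < ℓ := lt_of_lt_of_le hq.1.1.1.2 (hcols q.1)
      exact ⟨h1, h2⟩
    have hc1 : B.ncard = (Prod.snd '' B).ncard := (Set.ncard_image_of_injOn hinj).symm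
    have hc2 : (Prod.snd '' B).ncard ≤ (Set.Ico (j₀ + 1) ℓ).ncard :=
      Set.ncard_le_ncard himg (Set.finite_Ico _ _)
    have hIco : (Set.Ico (j₀ + 1) ℓ).ncard = ℓ - (j₀ + 1) := by
      rw [← Finset.coe_Ico, Set.ncard_coe_finset, Nat.card_Ico]
    have hj0ℓ : j₀ < ℓ := lt_of_lt_of_le hj0mem.1.2 (hcols (r w))
    have hn' : n ≤ ℓ - (j₀ + 1) := by
      calc n ≤ B.ncard := hBcard
        _ = (Prod.snd '' B).ncard := hc1
        _ ≤ (Set.Ico (j₀ + 1) ℓ).ncard := hc2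
        _ = ℓ - (j₀ + 1) := hIco
    have hj0lt : j₀ < ℓ - n := by omega
    obtain ⟨hcle, hclt⟩ := hleft (r w) j₀ hj0mem.1 hj0lt
    exact ⟨j₀, hj0mem, hj0min, hcle, hclt⟩
  -- chain: count (u+2) big forces count (u+1) big, with r (u+1) < r (u+2)
  have chain : ∀ u, n + 1 ≤ T.count (u + 2) →
      n + 1 ≤ T.count (u + 1) ∧ r (u + 1) < r (u + 2) := by
    intro u hw
    obtain ⟨j₀, hj0mem, hj0min, hcle, hclt⟩ := key (u + 2) hw
    have hsub1 : S (u + 2) ∩ {q : ℕ × ℕ | q.1 ≤ r (u + 2)} ⊆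
        {q : ℕ × ℕ | T.Box q.1 q.2 ∧ (q.1 < r (u + 2) ∨ (q.1 = r (u + 2) ∧ j₀ ≤ q.2)) ∧
          T.entry q.1 q.2 = u + 2} := by
      rintro q ⟨hq1, hq2⟩
      refine ⟨hq1.1, ?_, hq1.2⟩
      have hq2' : q.1 ≤ r (u + 2) := hq2
      rcases lt_or_eq_of_le hq2' with hlt | heq
      · exact Or.inl hlt
      · exact Or.inr ⟨heq, hj0min q.2 (by rw [← heq]; exact hq1)⟩
    have hpre2 : n + 1 ≤ T.prefixCount (r (u + 2)) j₀ (u + 2) :=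
      le_trans (hrmem _ hw)
        (Set.ncard_le_ncard hsub1 ((T.boxes_finite).subset (fun q hq => hq.1)))
    have hpre1 : n + 1 ≤ T.prefixCount (r (u + 2)) j₀ (u + 1) :=
      le_trans hpre2 (hlp (r (u + 2)) j₀ u hj0mem.1)
    have hsub2 : {q : ℕ × ℕ | T.Box q.1 q.2 ∧ (q.1 < r (u + 2) ∨ (q.1 = r (u + 2) ∧ j₀ ≤ q.2)) ∧
        T.entry q.1 q.2 = u + 1} ⊆ S (u + 1) ∩ {q : ℕ × ℕ | q.1 ≤ r (u + 2) - 1} := by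
      rintro q ⟨hb, hpos, he⟩
      refine ⟨⟨hb, he⟩, ?_⟩
      show q.1 ≤ r (u + 2) - 1
      rcases hpos with h' | ⟨h1, h2⟩
      · omega
      · exfalso
        have hbox : T.Box (r (u + 2)) q.2 := by rw [← h1]; exact hb
        have hmono := hss.1 (r (u + 2)) j₀ q.2 hj0mem.1 hbox h2
        rw [hj0mem.2] at hmono
        rw [h1] at he
        omega
    have hP1 : P (u + 1) (r (u + 2) - 1) :=
      le_trans hpre1 (Set.ncard_le_ncard hsub2 ((hfin (u + 1)).inter_of_left _))
    constructor
    · rw [hcount]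
      exact le_trans hP1 (Set.ncard_le_ncard Set.inter_subset_left (hfin (u + 1)))
    · have hle : r (u + 1) ≤ r (u + 2) - 1 := Nat.sInf_le hP1
      omega
  -- by induction, r (v+1) ≥ c + v
  have big : ∀ v, n + 1 ≤ T.count (v + 1) → c + v ≤ r (v + 1) := by
    intro v
    induction v with
    | zero =>
      intro hv
      obtain ⟨_, _, _, hcle, _⟩ := key 1 hv
      simpa using hcle
    | succ v ih =>
      intro hv
      obtain ⟨hbig, hlt⟩ := chain v hv
      have h4 : v + 1 + 1 = v + 2 := rfl
      rw [h4]
      have := ih hbig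
      omega
  have bound : ∀ v, 1 ≤ v → n + 1 ≤ T.count v → v ≤ h := by
    intro v h1 hv
    obtain ⟨u, rfl⟩ : ∃ u, v = u + 1 := ⟨v - 1, by omega⟩
    have h2 := big u hv
    obtain ⟨_, _, _, _, hclt⟩ := key (u + 1) hv
    omega
  have hsub : {v : ℕ | 1 ≤ v ∧ n + 1 ≤ T.count v} ⊆ Set.Icc 1 h :=
    fun v hv => ⟨hv.1, bound v hv.1 hv.2⟩
  have hfinal : T.gamma (n + 1) ≤ (Set.Icc 1 h).ncard :=
    Set.ncard_le_ncard hsub (Set.finite_Icc _ _)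
  have hIcc : (Set.Icc 1 h).ncard = h := by
    rw [← Finset.coe_Icc, Set.ncard_coe_finset, Nat.card_Icc]
    omega
  omega
end

section
/- Let a, b, c be positive integers and let T = λ/μ be a semistandard skew tableau satisfying the lattice property, where μ is a b×c rectangle (height b, width c) removed from the northwest corner, each of the first b rows of λ contains at least a+c boxes, and the (b+1)-th row of λ contains exactly a+c−1 boxes. Then either γ_a(T) > b or γ_{a+c}(T) > 0. -/
open SkewTableau


lemma box_fin (T : SkewTableau) : {q : ℕ × ℕ | T.Box q.1 q.2}.Finite := by
  obtain ⟨N, hN⟩ := T.support_finite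
  apply Set.Finite.subset ((Set.finite_Iio N).prod (Set.finite_Iio (T.lam 0)))
  intro q hq
  obtain ⟨h1, h2⟩ := hq
  simp only [Set.mem_prod, Set.mem_Iio]
  constructor
  · by_contra h
    push_neg at h
    have := hN q.1 h
    omega
  · exact lt_of_lt_of_le h2 (T.lam_antitone (Nat.zero_le q.1))

lemma prefix_fin (T : SkewTableau) (i j v : ℕ) :
    {q : ℕ × ℕ | T.Box q.1 q.2 ∧ (q.1 < i ∨ (q.1 = i ∧ j ≤ q.2)) ∧
      T.entry q.1 q.2 = v}.Finite :=
  (box_fin T).subset fun q hq => hq.1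

lemma cnt_fin (T : SkewTableau) (v : ℕ) :
    {q : ℕ × ℕ | T.Box q.1 q.2 ∧ T.entry q.1 q.2 = v}.Finite :=
  (box_fin T).subset fun q hq => hq.1

lemma entry_le (T : SkewTableau) (hss : T.Semistandard) (hlp : T.LatticeProperty) :
    ∀ i j, T.Box i j → T.entry i j ≤ i + 1 := by
  intro i
  induction i using Nat.strong_induction_on with
  | _ i IH =>
    intro j hbox
    by_contra hgt
    push_neg at hgt
    have hl := hlp i j (T.entry i j - 2) hbox
    rw [show T.entry i j - 2 + 2 = T.entry i j by omega,
        show T.entry i j - 2 + 1 = T.entry i j - 1 by omega] at hl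
    have h1 : 0 < T.prefixCount i j (T.entry i j) := by
      unfold SkewTableau.prefixCount
      rw [Set.ncard_pos (prefix_fin T i j _)]
      exact ⟨(i, j), hbox, Or.inr ⟨rfl, le_refl j⟩, rfl⟩
    have h0 : T.prefixCount i j (T.entry i j - 1) = 0 := by
      unfold SkewTableau.prefixCount
      have hempty : {q : ℕ × ℕ | T.Box q.1 q.2 ∧ (q.1 < i ∨ (q.1 = i ∧ j ≤ q.2)) ∧
          T.entry q.1 q.2 = T.entry i j - 1} = ∅ := by
        ext ⟨q1, q2⟩
        simp only [Set.mem_setOf_eq, Set.mem_empty_iff_false, iff_false]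
        rintro ⟨hq, h | ⟨h, hj⟩, he⟩
        · have := IH q1 h q2 hq
          omega
        · subst h
          have := hss.1 q1 j q2 hbox hq hj
          omega
      rw [hempty, Set.ncard_empty]
    omega


/-- Let `T = λ/μ` be a semistandard skew tableau with the lattice property where `μ` is
a `b × c` rectangle, the first `b` rows of `λ` contain at least `a + c` boxes each, and
the `(b+1)`-th row of `λ` contains exactly `a + c − 1` boxes.  Then `γ_a(T) > b` or
`γ_{a+c}(T) > 0`. -/
theorem stmt_7 (T : SkewTableau) (hss : T.Semistandard) (hlp : T.LatticeProperty)
    (a b c : ℕ) (ha : 0 < a) (hb : 0 < b) (hc : 0 < c)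
    (hmu : ∀ i, T.mu i = if i < b then c else 0)
    (hfirst : ∀ i, i < b → a + c ≤ T.lam i)
    (hrow : T.lam b = a + c - 1) :
    b < T.gamma a ∨ 0 < T.gamma (a + c) := by
  classical
  have inj : ∀ i : ℕ, Function.Injective fun j : ℕ => ((i, j) : ℕ × ℕ) :=
    fun i x y h => by simpa using h
  have hmub : T.mu b = 0 := by rw [hmu]; simp
  have hboxb : ∀ j, j < a + c - 1 → T.Box b j :=
    fun j hj => ⟨by rw [hmub]; omega, by rw [hrow]; omega⟩
  have hboxbc : ∀ j, j < c → T.Box b j := fun j hj => hboxb j (by omega)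
  have hboxlt : ∀ i, i < b → ∀ j, c ≤ j → j < T.lam i → T.Box i j :=
    fun i hi j h1 h2 => ⟨by rw [hmu]; simp [hi]; omega, h2⟩
  -- lower bound on entries in columns ≥ c
  have entry_ge : ∀ i, i ≤ b → ∀ j, c ≤ j → j < T.lam i → i + 1 ≤ T.entry i j := by
    intro i
    induction i with
    | zero =>
      intro _ j hcj hj
      exact T.entry_pos 0 j (by rw [hmu]; split <;> omega) hj
    | succ i IH =>
      intro hib j hcj hj
      have hj' : j < T.lam i := lt_of_lt_of_le hj (T.lam_antitone (Nat.le_succ i))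
      have h1 := IH (by omega) j hcj hj'
      have hcol := hss.2 i j ⟨by rw [hmu]; split <;> omega, hj'⟩
        ⟨by rw [hmu]; split <;> omega, hj⟩
      omega
  have hle := entry_le T hss hlp
  have entry_row : ∀ i, i < b → ∀ j, T.Box i j → T.entry i j = i + 1 := by
    intro i hi j hbox
    have h1 := hle i j hbox
    have h2 : c ≤ j := by have := hbox.1; rw [hmu] at this; simpa [hi] using this
    have h3 := entry_ge i hi.le j h2 hbox.2
    omega
  have entry_rowb : ∀ j, c ≤ j → j < T.lam b → T.entry b j = b + 1 := by
    intro j h1 h2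
    have h3 := hle b j ⟨by rw [hmub]; omega, h2⟩
    have h4 := entry_ge b le_rfl j h1 h2
    omega
  -- counting helpers
  have count_ge : ∀ (v : ℕ) (s : Finset (ℕ × ℕ)),
      (∀ q ∈ s, T.Box q.1 q.2 ∧ T.entry q.1 q.2 = v) → s.card ≤ T.count v := by
    intro v s hs
    rw [← Set.ncard_coe_finset]
    exact Set.ncard_le_ncard (fun q hq => hs q (by simpa using hq)) (cnt_fin T v)
  have prefix_ge : ∀ (i j v : ℕ) (s : Finset (ℕ × ℕ)),
      (∀ q ∈ s, T.Box q.1 q.2 ∧ (q.1 < i ∨ (q.1 = i ∧ j ≤ q.2)) ∧ T.entry q.1 q.2 = v) →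
      s.card ≤ T.prefixCount i j v := by
    intro i j v s hs
    rw [← Set.ncard_coe_finset]
    exact Set.ncard_le_ncard (fun q hq => hs q (by simpa using hq)) (prefix_fin T i j v)
  have prefix_le : ∀ (i j v : ℕ) (s : Finset (ℕ × ℕ)),
      (∀ i' j', T.Box i' j' → (i' < i ∨ (i' = i ∧ j ≤ j')) → T.entry i' j' = v →
        (i', j') ∈ s) →
      T.prefixCount i j v ≤ s.card := by
    intro i j v s hs
    rw [← Set.ncard_coe_finset]
    apply Set.ncard_le_ncard _ s.finite_toSet
    rintro ⟨x, y⟩ ⟨h1, h2, h3⟩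
    simpa using hs x y h1 h2 h3
  -- count is antitone on values ≥ 1
  obtain ⟨N, hN⟩ := T.support_finite
  have hbN : b < N := by
    by_contra h
    push_neg at h
    have := hN b h
    rw [hrow] at this
    omega
  have hPb : T.lam b ≠ 0 := by rw [hrow]; omega
  set I := Nat.findGreatest (fun i => T.lam i ≠ 0) N with hI
  have hIb : b ≤ I := Nat.le_findGreatest hbN.le hPb
  have hItop : ∀ q : ℕ × ℕ, T.Box q.1 q.2 → q.1 ≤ I := by
    intro q hq
    by_contra h
    push_neg at h
    have hlam : T.lam q.1 ≠ 0 := by have := hq.2; omega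
    rcases le_or_gt q.1 N with h' | h'
    · exact Nat.findGreatest_is_greatest (P := fun i => T.lam i ≠ 0) (hI ▸ h) h' hlam
    · exact hlam (hN q.1 h'.le)
  have hboxI : T.Box I 0 := by
    refine ⟨?_, ?_⟩
    · rw [hmu, if_neg (by omega)]
    · have h := Nat.findGreatest_spec (P := fun i => T.lam i ≠ 0) hbN.le hPb
      rw [← hI] at h
      omega
  have hcount_eq : ∀ v, T.count v = T.prefixCount I 0 v := by
    intro v
    unfold SkewTableau.count SkewTableau.prefixCount
    congr 1
    ext q
    simp only [Set.mem_setOf_eq]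
    constructor
    · rintro ⟨h1, h2⟩
      refine ⟨h1, ?_, h2⟩
      rcases lt_or_eq_of_le (hItop q h1) with h | h
      · exact Or.inl h
      · exact Or.inr ⟨h, Nat.zero_le _⟩
    · rintro ⟨h1, _, h2⟩
      exact ⟨h1, h2⟩
  have count_step : ∀ v, T.count (v + 2) ≤ T.count (v + 1) := by
    intro v
    rw [hcount_eq, hcount_eq]
    exact hlp I 0 v hboxI
  have count_anti : ∀ u v, 1 ≤ u → u ≤ v → T.count v ≤ T.count u := by
    intro u v hu huv
    induction v with
    | zero => omega
    | succ v IH =>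
      rcases Nat.lt_or_ge u (v + 1) with h | h
      · have h2 : T.count (v + 1) ≤ T.count v := by
          have := count_step (v - 1)
          rw [show v - 1 + 2 = v + 1 by omega, show v - 1 + 1 = v by omega] at this
          exact this
        exact le_trans h2 (IH (by omega))
      · have : u = v + 1 := by omega
        rw [this]
  -- gamma sets are finite
  have gamma_fin : ∀ n, 1 ≤ n → {v : ℕ | 1 ≤ v ∧ n ≤ T.count v}.Finite := by
    intro n hn
    apply (Set.finite_Icc 1 N).subset
    rintro v ⟨h1, h2⟩
    refine ⟨h1, ?_⟩
    have hpos : T.count v ≠ 0 := by omega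
    have hne : {q : ℕ × ℕ | T.Box q.1 q.2 ∧ T.entry q.1 q.2 = v}.Nonempty :=
      Set.nonempty_of_ncard_ne_zero hpos
    obtain ⟨q, hq, he⟩ := hne
    have h3 := hle q.1 q.2 hq
    have h4 : q.1 < N := by
      by_contra hcon
      push_neg at hcon
      have := hN q.1 hcon
      have := hq.2
      omega
    omega
  by_cases hA : a ≤ T.count (b + 1)
  · -- enough values appear ≥ a times
    left
    have hsub : ↑(Finset.Icc 1 (b + 1)) ⊆ {v : ℕ | 1 ≤ v ∧ a ≤ T.count v} := by
      intro v hv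
      simp only [Finset.coe_Icc, Set.mem_Icc] at hv
      exact ⟨hv.1, le_trans hA (count_anti v (b + 1) hv.1 hv.2)⟩
    have hcard := Set.ncard_le_ncard hsub (gamma_fin a ha)
    rw [Set.ncard_coe_finset, Nat.card_Icc] at hcard
    unfold SkewTableau.gamma
    omega
  · right
    push_neg at hA
    -- row b, columns < c have entries in [1, b]
    have hno : ∀ j, j < c → T.entry b j ≠ b + 1 := by
      intro j0 hj0 hej
      have hsubcard := count_ge (b + 1)
        (insert (b, j0) ((Finset.Ico c (a + c - 1)).image (fun j => (b, j)))) ?_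
      · rw [Finset.card_insert_of_notMem ?_, Finset.card_image_of_injective _ (inj b),
          Nat.card_Ico] at hsubcard
        · omega
        · simp only [Finset.mem_image, Finset.mem_Ico, Prod.mk.injEq, true_and, not_exists]
          intro x hx
          omega
      · intro q hq
        simp only [Finset.mem_insert, Finset.mem_image, Finset.mem_Ico] at hq
        rcases hq with h | ⟨j, hj, rfl⟩
        · subst h
          exact ⟨hboxb j0 (by omega), hej⟩
        · exact ⟨hboxb j (by omega), entry_rowb j hj.1 (by rw [hrow]; omega)⟩
    set m : ℕ → ℕ := fun v => ((Finset.range c).filter (fun j => T.entry b j = v)).card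
      with hmdef
    have hmem : ∀ j ∈ Finset.range c, T.entry b j ∈ Finset.Icc 1 b := by
      intro j hj
      rw [Finset.mem_range] at hj
      rw [Finset.mem_Icc]
      have h1 := T.entry_pos b j (hboxbc j hj).1 (hboxbc j hj).2
      have h2 := hle b j (hboxbc j hj)
      have h3 := hno j hj
      omega
    have hsum : c = ∑ v ∈ Finset.Icc 1 b, m v := by
      have := Finset.card_eq_sum_card_fiberwise hmem
      rwa [Finset.card_range] at this
    have step : ∀ v, 2 ≤ v → v ≤ b → T.lam (v - 1) + m v ≤ T.lam (v - 2) := by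
      intro v h2 hvb
      by_cases hmv : m v = 0
      · rw [hmv]
        simpa using T.lam_antitone (show v - 2 ≤ v - 1 by omega)
      · have hex : ∃ j, j < c ∧ T.entry b j = v := by
          obtain ⟨j, hj⟩ := Finset.card_pos.mp (by omega : 0 < m v)
          rw [Finset.mem_filter, Finset.mem_range] at hj
          exact ⟨j, hj⟩
        obtain ⟨hjvc, hjve⟩ := Nat.find_spec hex
        set jv := Nat.find hex with hjvdef
        have hjmin : ∀ j, j < c → T.entry b j = v → jv ≤ j := by
          intro j hj1 hj2
          by_contra hcon
          push_neg at hcon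
          exact Nat.find_min hex hcon ⟨hj1, hj2⟩
        have hlat := hlp b jv (v - 2) (hboxbc jv hjvc)
        rw [show v - 2 + 2 = v by omega, show v - 2 + 1 = v - 1 by omega] at hlat
        have hlow : (T.lam (v - 1) - c) + m v ≤ T.prefixCount b jv v := by
          have hg := prefix_ge b jv v
            (((Finset.Ico c (T.lam (v - 1))).image (fun j => (v - 1, j))) ∪
              (((Finset.range c).filter (fun j => T.entry b j = v)).image (fun j => (b, j)))) ?_
          · rwa [Finset.card_union_of_disjoint ?_,
              Finset.card_image_of_injective _ (inj (v - 1)),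
              Finset.card_image_of_injective _ (inj b), Nat.card_Ico] at hg
            rw [Finset.disjoint_left]
            rintro q hq1 hq2
            simp only [Finset.mem_image, Finset.mem_Ico, Finset.mem_filter,
              Finset.mem_range] at hq1 hq2
            obtain ⟨x, _, rfl⟩ := hq1
            obtain ⟨y, _, hy⟩ := hq2
            have : b = v - 1 := by
              have := congrArg Prod.fst hy
              simpa using this
            omega
          · intro q hq
            simp only [Finset.mem_union, Finset.mem_image, Finset.mem_Ico, Finset.mem_filter,
              Finset.mem_range] at hq
            rcases hq with ⟨j, hj, rfl⟩ | ⟨j, ⟨hjc, hje⟩, rfl⟩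
            · have hbx := hboxlt (v - 1) (by omega) j hj.1 hj.2
              have heq := entry_row (v - 1) (by omega) j hbx
              exact ⟨hbx, Or.inl (show v - 1 < b by omega),
                show T.entry (v - 1) j = v by omega⟩
            · exact ⟨hboxbc j hjc, Or.inr ⟨rfl, hjmin j hjc hje⟩, hje⟩
        have hup : T.prefixCount b jv (v - 1) ≤ T.lam (v - 2) - c := by
          have hl := prefix_le b jv (v - 1)
            ((Finset.Ico c (T.lam (v - 2))).image (fun j => (v - 2, j))) ?_
          · rwa [Finset.card_image_of_injective _ (inj (v - 2)), Nat.card_Ico] at hl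
          · intro q1 q2 hbox hpre he
            simp only [Finset.mem_image, Finset.mem_Ico]
            rcases hpre with h | ⟨h, hj⟩
            · have heq := entry_row q1 h q2 hbox
              have hq1 : q1 = v - 2 := by omega
              have hcq : c ≤ q2 := by
                have := hbox.1
                rw [hmu, if_pos h] at this
                exact this
              exact ⟨q2, ⟨hcq, by rw [← hq1]; exact hbox.2⟩, by rw [hq1]⟩
            · exfalso
              rw [h] at hbox he
              have h1 := hss.1 b jv q2 (hboxbc jv hjvc) hbox hj
              omega
        have hl1 : a + c ≤ T.lam (v - 1) := hfirst (v - 1) (by omega)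
        have hl2 : T.lam (v - 1) ≤ T.lam (v - 2) := T.lam_antitone (by omega)
        omega
    have chain : ∀ k, 1 ≤ k → k ≤ b → T.lam (k - 1) + ∑ v ∈ Finset.Icc 2 k, m v ≤ T.lam 0 := by
      intro k
      induction k with
      | zero => omega
      | succ k IH =>
        intro _ hkb
        rcases Nat.eq_zero_or_pos k with hk0 | hk1
        · subst hk0
          simp
        · have hicc : Finset.Icc 2 (k + 1) = insert (k + 1) (Finset.Icc 2 k) := by
            ext x
            simp only [Finset.mem_Icc, Finset.mem_insert]
            omega
          rw [hicc, Finset.sum_insert (by simp only [Finset.mem_Icc]; omega)]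
          have h1 := step (k + 1) (by omega) hkb
          have h2 := IH hk1 (by omega)
          simp only [Nat.add_sub_cancel] at h1
          have hk1' : k + 1 - 2 = k - 1 := by omega
          rw [hk1'] at h1
          simp only [Nat.add_sub_cancel]
          omega
    have hcount1 : (T.lam 0 - c) + m 1 ≤ T.count 1 := by
      have hg := count_ge 1
        (((Finset.Ico c (T.lam 0)).image (fun j => (0, j))) ∪
          (((Finset.range c).filter (fun j => T.entry b j = 1)).image (fun j => (b, j)))) ?_
      · rwa [Finset.card_union_of_disjoint ?_, Finset.card_image_of_injective _ (inj 0),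
          Finset.card_image_of_injective _ (inj b), Nat.card_Ico] at hg
        rw [Finset.disjoint_left]
        rintro q hq1 hq2
        simp only [Finset.mem_image, Finset.mem_Ico, Finset.mem_filter,
          Finset.mem_range] at hq1 hq2
        obtain ⟨x, _, rfl⟩ := hq1
        obtain ⟨y, _, hy⟩ := hq2
        have : b = 0 := by
          have := congrArg Prod.fst hy
          simpa using this
        omega
      · intro q hq
        simp only [Finset.mem_union, Finset.mem_image, Finset.mem_Ico, Finset.mem_filter,
          Finset.mem_range] at hq
        rcases hq with ⟨j, hj, rfl⟩ | ⟨j, ⟨hjc, hje⟩, rfl⟩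
        · exact ⟨hboxlt 0 hb j hj.1 hj.2, entry_row 0 hb j (hboxlt 0 hb j hj.1 hj.2)⟩
        · exact ⟨hboxbc j hjc, hje⟩
    have hsum1 : ∑ v ∈ Finset.Icc 1 b, m v = m 1 + ∑ v ∈ Finset.Icc 2 b, m v := by
      have hicc : Finset.Icc 1 b = insert 1 (Finset.Icc 2 b) := by
        ext x
        simp only [Finset.mem_Icc, Finset.mem_insert]
        omega
      rw [hicc, Finset.sum_insert (by simp only [Finset.mem_Icc]; omega)]
    have h0b : a + c ≤ T.lam (b - 1) := hfirst (b - 1) (by omega)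
    have hmono : T.lam (b - 1) ≤ T.lam 0 := T.lam_antitone (by omega)
    have hchain := chain b hb le_rfl
    have hc1 : a + c ≤ T.count 1 := by omega
    have hfin := gamma_fin (a + c) (by omega)
    have hpos := (Set.ncard_pos hfin).mpr ⟨1, le_refl 1, hc1⟩
    unfold SkewTableau.gamma
    exact hpos
end

section
/- Let p be a prime, k a field of characteristic p, C a cyclic group of order p, and m, e positive integers with m·e = p−1. Let M be a kC-module with a filtration 0 ⊆ M_0 ⊆ M_1 ⊆ … ⊆ M_e = M such that M_0 is a direct sum of trivial modules and each quotient M_i/M_{i−1} (for 1 ≤ i ≤ e) is a direct sum of indecomposable modules of dimension m. Then for each 0 ≤ i ≤ e, the module M_i has no indecomposable direct summand of dimension ≥ 2 + m·i. -/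
/-- The `k`-linear endomorphism `m ↦ c • m − m` of a `kC`-module, for `c ∈ C`. -/
noncomputable def groupElemSubOne (k : Type*) {C : Type*} [CommSemiring k] [Group C]
    (M : Type*) [AddCommGroup M] [Module k M] [Module (MonoidAlgebra k C) M]
    [SMulCommClass (MonoidAlgebra k C) k M] (c : C) : Module.End k M :=
  DistribMulAction.toLinearMap k M (MonoidAlgebra.of k C c) - LinearMap.id

/-- For `C = ⟨g⟩` of order `p`, `k` of characteristic `p`, and `m·e = p−1`: if a
`kC`-module `M` has a filtration `0 ⊆ M₀ ⊆ M₁ ⊆ … ⊆ M_e = M` where `M₀` is a direct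
sum of trivial modules and each `M_i/M_{i−1}` is a direct sum of indecomposables of
dimension `m`, then `M_i` has no indecomposable direct summand of dimension
`≥ 2 + m·i`, i.e. `(g−1)^{1+m·i}` annihilates `M_i`.  (The condition that a
subquotient is a direct sum of `m`-dimensional indecomposables is expressed via the
nilpotency degree and the rank of the induced action of `g − 1` on it.) -/
theorem stmt_8 {p : ℕ} (hp : p.Prime)
    (k : Type) [Field k] [CharP k p]
    (C : Type) [CommGroup C] [Fintype C] (hcard : Fintype.card C = p)
    (g : C) (hg : ∀ x : C, x ∈ Subgroup.zpowers g)
    (m e : ℕ) (hm : 0 < m) (he : 0 < e) (hme : m * e = p - 1)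
    (M : Type) [AddCommGroup M] [Module k M] [Module (MonoidAlgebra k C) M]
    [IsScalarTower k (MonoidAlgebra k C) M] [SMulCommClass (MonoidAlgebra k C) k M]
    [Module.Finite k M]
    (F : Fin (e + 1) → Submodule (MonoidAlgebra k C) M)
    (hmono : Monotone F) (htop : F (Fin.last e) = ⊤)
    -- `M₀` is a direct sum of trivial modules
    (htriv : ∀ (c : C) (x : M), x ∈ F 0 → MonoidAlgebra.of k C c • x = x)
    -- each `M_i/M_{i−1}` is a direct sum of indecomposables of dimension `m`
    (hquot : ∀ i : Fin e,
      (∀ x : M, x ∈ F i.succ →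
        ((groupElemSubOne k M g ^ m) x) ∈ F i.castSucc) ∧
      m * (Module.finrank k
            ↥(Submodule.map (groupElemSubOne k M g ^ (m - 1))
                ((F i.succ).restrictScalars k) ⊔
              (F i.castSucc).restrictScalars k) -
          Module.finrank k ↥((F i.castSucc).restrictScalars k))
        = Module.finrank k ↥((F i.succ).restrictScalars k) -
          Module.finrank k ↥((F i.castSucc).restrictScalars k)) :
    ∀ i : Fin (e + 1), ∀ x : M, x ∈ F i →
      (groupElemSubOne k M g ^ (1 + m * (i : ℕ))) x = 0 := by
  intro i
  induction i using Fin.induction with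
  | zero =>
    intro x hx
    simp only [Fin.val_zero, Nat.mul_zero, Nat.add_zero, pow_one, groupElemSubOne,
      LinearMap.sub_apply, DistribMulAction.toLinearMap, DistribSMul.toLinearMap_apply, LinearMap.id_apply]
    rw [htriv g x hx, sub_self]
  | succ i ih =>
    intro x hx
    have h1 := (hquot i).1 x hx
    have hexp : 1 + m * ((i.succ : Fin (e+1)) : ℕ) = (1 + m * (i.castSucc : ℕ)) + m := by
      simp [Fin.val_succ, Fin.coe_castSucc]; ring
    rw [hexp, pow_add, Module.End.mul_apply]
    exact ih _ h1
end

section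
/- Let p be a prime, k a field of characteristic p, C cyclic of order p, and m, e positive integers with m·e = p−1. Let M be a kC-module with a filtration 0 ⊆ M_0 ⊆ … ⊆ M_e = M where M_0 is a direct sum of trivial modules and M_i/M_{i−1} ≅ I_m^{μ_i} for 1 ≤ i ≤ e and nonnegative integers μ_1,…,μ_e. Then: (i) the number of indecomposable summands of M of dimension ≥ m is at least max{μ_i : 1 ≤ i ≤ e}; (ii) the number of indecomposable summands of M of dimension ≥ p−m+1 is at most min{μ_i : 1 ≤ i ≤ e}. -/
open Module Submodule

section Aux
variable {K V W : Type*} [Field K] [AddCommGroup V] [Module K V]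
  [AddCommGroup W] [Module K W] [FiniteDimensional K V]

lemma aux_rn (f : V →ₗ[K] W) (B : Submodule K V) :
    finrank K ↥(B.map f) + finrank K ↥(B ⊓ LinearMap.ker f) = finrank K ↥B := by
  have h := LinearMap.finrank_range_add_finrank_ker (f.comp B.subtype)
  rw [LinearMap.range_comp, Submodule.range_subtype, LinearMap.ker_comp] at h
  rwa [← Submodule.finrank_map_subtype_eq B (Submodule.comap B.subtype (LinearMap.ker f)),
    Submodule.map_comap_subtype] at h

lemma aux_mkQ (P S : Submodule K V) :
    finrank K ↥(S.map P.mkQ) + finrank K ↥P = finrank K ↥(S ⊔ P) := by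
  have h1 := aux_rn P.mkQ S
  rw [Submodule.ker_mkQ] at h1
  have h2 := Submodule.finrank_sup_add_finrank_inf_eq S P
  omega

lemma aux_delta (T : Module.End K V) (P Y : Submodule K V) :
    finrank K ↥Y + finrank K ↥P
      = finrank K ↥(Y.map T ⊔ P) + finrank K ↥(Y ⊓ Submodule.comap T P) := by
  have h1 := aux_rn (P.mkQ ∘ₗ T) Y
  rw [LinearMap.ker_comp, Submodule.ker_mkQ] at h1
  have h2 : Y.map (P.mkQ ∘ₗ T) = (Y.map T).map P.mkQ := Submodule.map_comp _ _ _
  rw [h2] at h1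
  have h3 := aux_mkQ P (Y.map T)
  omega

end Aux


/-- `γ_j(M)`: the number of indecomposable direct summands of the `kC`-module `M` of
`k`-dimension at least `j`, computed as
`rank (g−1)^{j−1} − rank (g−1)^j` for a generator `g` of `C`. -/
noncomputable def gammaGe (k : Type*) {C : Type*} [CommRing k] [Group C]
    (M : Type*) [AddCommGroup M] [Module k M] [Module (MonoidAlgebra k C) M]
    [SMulCommClass (MonoidAlgebra k C) k M] (g : C) (j : ℕ) : ℕ :=
  Module.finrank k ↥(LinearMap.range (groupElemSubOne k M g ^ (j - 1))) -
    Module.finrank k ↥(LinearMap.range (groupElemSubOne k M g ^ j))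

/-- For `C = ⟨g⟩` of order `p`, `k` of characteristic `p`, `m·e = p−1`: if a
`kC`-module `M` has a filtration `0 ⊆ M₀ ⊆ … ⊆ M_e = M` with `M₀` a direct sum of
trivial modules and `M_i/M_{i−1} ≅ I_m^{μ_i}`, then
(i) `γ_m(M) ≥ max μ_i` and (ii) `γ_{p−m+1}(M) ≤ min μ_i`. -/
theorem stmt_9 {p : ℕ} (hp : p.Prime)
    (k : Type) [Field k] [CharP k p]
    (C : Type) [CommGroup C] [Fintype C] (hcard : Fintype.card C = p)
    (g : C) (hg : ∀ x : C, x ∈ Subgroup.zpowers g)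
    (m e : ℕ) (hm : 0 < m) (he : 0 < e) (hme : m * e = p - 1)
    (M : Type) [AddCommGroup M] [Module k M] [Module (MonoidAlgebra k C) M]
    [IsScalarTower k (MonoidAlgebra k C) M] [SMulCommClass (MonoidAlgebra k C) k M]
    [Module.Finite k M]
    (F : Fin (e + 1) → Submodule (MonoidAlgebra k C) M)
    (hmono : Monotone F) (htop : F (Fin.last e) = ⊤)
    (μ : Fin e → ℕ)
    -- `M₀` is a direct sum of trivial modules
    (htriv : ∀ (c : C) (x : M), x ∈ F 0 → MonoidAlgebra.of k C c • x = x)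
    -- `M_i/M_{i−1} ≅ I_m^{μ_i}`: `(g−1)^m` maps `M_i` into `M_{i−1}`, the quotient
    -- has dimension `m·μ_i`, and `(g−1)^{m−1}` has rank `μ_i` on the quotient
    (hquot : ∀ i : Fin e,
      (∀ x : M, x ∈ F i.succ →
        ((groupElemSubOne k M g ^ m) x) ∈ F i.castSucc) ∧
      (Module.finrank k ↥((F i.succ).restrictScalars k) -
          Module.finrank k ↥((F i.castSucc).restrictScalars k) = m * μ i) ∧
      (Module.finrank k
          ↥(Submodule.map (groupElemSubOne k M g ^ (m - 1))
              ((F i.succ).restrictScalars k) ⊔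
            (F i.castSucc).restrictScalars k) -
        Module.finrank k ↥((F i.castSucc).restrictScalars k) = μ i)) :
    (∀ i : Fin e, μ i ≤ gammaGe k M g m) ∧
    (∀ i : Fin e, gammaGe k M g (p - m + 1) ≤ μ i) := by
  set T : Module.End k M := groupElemSubOne k M g with hTdef
  have hTapp : ∀ x : M, T x = MonoidAlgebra.of k C g • x - x := by
    intro x; simp [hTdef, groupElemSubOne]; rfl
  have hTmem : ∀ (P : Submodule (MonoidAlgebra k C) M), ∀ x ∈ P, T x ∈ P := by
    intro P x hx
    rw [hTapp]
    exact P.sub_mem (P.smul_mem _ hx) hx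
  have hmapT : ∀ (P : Submodule (MonoidAlgebra k C) M),
      Submodule.map T (P.restrictScalars k) ≤ P.restrictScalars k := by
    rintro P y ⟨x, hx, rfl⟩
    exact hTmem P x hx
  have hT0 : ∀ x ∈ F 0, T x = 0 := by
    intro x hx; rw [hTapp, htriv g x hx, sub_self]
  have hpowc : ∀ (a b : ℕ) (x : M), (T ^ (a + b)) x = (T ^ a) ((T ^ b) x) := by
    intro a b x; rw [pow_add, Module.End.mul_apply]
  have hTcomm : ∀ (n : ℕ) (x : M), T ((T ^ n) x) = (T ^ n) (T x) := by
    intro n x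
    rw [← Module.End.mul_apply, ← pow_succ', pow_succ, Module.End.mul_apply]
  have hdown : ∀ t : ℕ, t ≤ e → ∀ x : M, (T ^ (m * t)) x ∈ F ⟨e - t, by omega⟩ := by
    intro t
    induction t with
    | zero =>
      intro _ x
      have hfin : (⟨e - 0, by omega⟩ : Fin (e + 1)) = Fin.last e := by
        apply Fin.ext; simp [Fin.last]
      rw [hfin, htop]
      trivial
    | succ t ih =>
      intro ht x
      have hy := ih (by omega) x
      have hlt : e - (t + 1) < e := by omega
      set i : Fin e := ⟨e - (t + 1), hlt⟩ with hidef
      have h1 : (⟨e - t, by omega⟩ : Fin (e + 1)) = i.succ := by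
        apply Fin.ext; simp [hidef, Fin.val_succ]; omega
      rw [h1] at hy
      have h2 := (hquot i).1 _ hy
      have h3 : (T ^ (m * (t + 1))) x = (T ^ m) ((T ^ (m * t)) x) := by
        rw [show m * (t + 1) = m + m * t by ring, hpowc]
      rw [h3]
      have h4 : F i.castSucc = F ⟨e - (t + 1), by omega⟩ := by
        congr 1
      exact h4 ▸ h2
  have hkill : ∀ t : ℕ, ∀ ht : t ≤ e, ∀ x : M, x ∈ F ⟨t, by omega⟩ → (T ^ (m * t)) x ∈ F 0 := by
    intro t
    induction t with
    | zero =>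
      intro _ x hx
      simpa using hx
    | succ t ih =>
      intro ht x hx
      have hlt : t < e := by omega
      set i : Fin e := ⟨t, hlt⟩ with hidef
      have h1 : (⟨t + 1, by omega⟩ : Fin (e + 1)) = i.succ := by
        apply Fin.ext; simp [hidef, Fin.val_succ]
      rw [h1] at hx
      have h2 := (hquot i).1 x hx
      have h4 : F i.castSucc = F ⟨t, by omega⟩ := by congr 1
      rw [h4] at h2
      have h5 := ih (by omega) _ h2
      have h3 : (T ^ (m * (t + 1))) x = (T ^ (m * t)) ((T ^ m) x) := by
        rw [show m * (t + 1) = m * t + m by ring, hpowc]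
      rw [h3]
      exact h5
  have hkill1 : ∀ (i : Fin e) (x : M), x ∈ F i.castSucc → (T ^ (m * (i : ℕ) + 1)) x = 0 := by
    intro i x hx
    have h0 : (T ^ (m * (i : ℕ))) x ∈ F 0 := by
      apply hkill (i : ℕ) (le_of_lt i.2)
      have : (⟨(i : ℕ), by omega⟩ : Fin (e + 1)) = i.castSucc := by
        apply Fin.ext; simp
      rw [this]
      exact hx
    rw [show m * (i : ℕ) + 1 = 1 + m * (i : ℕ) by omega, hpowc, pow_one]
    exact hT0 _ h0
  have hgamma : ∀ j : ℕ, 1 ≤ j → gammaGe k M g j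
      = finrank k ↥(LinearMap.range (T ^ (j - 1)) ⊓ LinearMap.ker T) := by
    intro j hj
    have h1 := aux_rn T (LinearMap.range (T ^ (j - 1)))
    have h2 : Submodule.map T (LinearMap.range (T ^ (j - 1))) = LinearMap.range (T ^ j) := by
      conv_rhs => rw [show j = (j - 1) + 1 by omega]
      rw [pow_succ', Module.End.mul_eq_comp, LinearMap.range_comp]
    rw [h2] at h1
    have key : gammaGe k M g j = finrank k ↥(LinearMap.range (T ^ (j - 1))) -
        finrank k ↥(LinearMap.range (T ^ j)) := rfl
    rw [key]
    omega
  -- Part (i)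
  have part1 : ∀ i : Fin e, μ i ≤ gammaGe k M g m := by
    intro i
    obtain ⟨hq1', hq2', hq3'⟩ := hquot i
    set N' : Submodule k M := (F i.succ).restrictScalars k with hN
    set P' : Submodule k M := (F i.castSucc).restrictScalars k with hP
    have hPN : P' ≤ N' := by
      intro x hx
      exact hmono (Fin.castSucc_le_succ i) hx
    have hq1 : Submodule.map (T ^ m) N' ≤ P' := by
      rintro y ⟨x, hx, rfl⟩
      exact hq1' x hx
    have hdP_le : finrank k ↥P' ≤ finrank k ↥N' := Submodule.finrank_mono hPN
    have hq3 : finrank k ↥(Submodule.map (T ^ (m - 1)) N' ⊔ P') = finrank k ↥P' + μ i := by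
      have hle : finrank k ↥P' ≤ finrank k ↥(Submodule.map (T ^ (m - 1)) N' ⊔ P') :=
        Submodule.finrank_mono le_sup_right
      omega
    set V : Submodule k M := Submodule.map (T ^ (m - 1)) N' with hV
    have hTV : Submodule.map T V ≤ V ⊓ P' := by
      apply le_inf
      · have e1 : Submodule.map T V = Submodule.map (T ^ (m - 1)) (Submodule.map T N') := by
          rw [hV, ← Submodule.map_comp, ← Submodule.map_comp, ← Module.End.mul_eq_comp,
            ← Module.End.mul_eq_comp, ← pow_succ', ← pow_succ]
        rw [e1, hV]
        exact Submodule.map_mono (hmapT _)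
      · have e2 : Submodule.map T V = Submodule.map (T ^ m) N' := by
          rw [hV, ← Submodule.map_comp, ← Module.End.mul_eq_comp, ← pow_succ',
            Nat.sub_add_cancel hm]
        rw [e2]
        exact hq1
    have b1 := aux_rn T V
    have b2 := Submodule.finrank_sup_add_finrank_inf_eq V P'
    have b3 : finrank k ↥(Submodule.map T V) ≤ finrank k ↥(V ⊓ P') :=
      Submodule.finrank_mono hTV
    have b5 : μ i ≤ finrank k ↥(V ⊓ LinearMap.ker T) := by omega
    have b6 : V ⊓ LinearMap.ker T ≤ LinearMap.range (T ^ (m - 1)) ⊓ LinearMap.ker T :=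
      inf_le_inf_right _ (by rw [hV]; exact LinearMap.map_le_range)
    rw [hgamma m hm]
    rw [show m - 1 = m - 1 from rfl]
    exact le_trans b5 (Submodule.finrank_mono b6)
  -- Part (ii)
  have hp2 : 2 ≤ p := hp.two_le
  have part2 : ∀ i : Fin e, gammaGe k M g (p - m + 1) ≤ μ i := by
    intro i
    obtain ⟨hq1', hq2', hq3'⟩ := hquot i
    set N' : Submodule k M := (F i.succ).restrictScalars k with hN
    set P' : Submodule k M := (F i.castSucc).restrictScalars k with hP
    have hPN : P' ≤ N' := by
      intro x hx
      exact hmono (Fin.castSucc_le_succ i) hx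
    have hq1 : Submodule.map (T ^ m) N' ≤ P' := by
      rintro y ⟨x, hx, rfl⟩
      exact hq1' x hx
    have hdP_le : finrank k ↥P' ≤ finrank k ↥N' := Submodule.finrank_mono hPN
    have hq3 : finrank k ↥(Submodule.map (T ^ (m - 1)) N' ⊔ P') = finrank k ↥P' + μ i := by
      have hle : finrank k ↥P' ≤ finrank k ↥(Submodule.map (T ^ (m - 1)) N' ⊔ P') :=
        Submodule.finrank_mono le_sup_right
      omega
    have hq2N : finrank k ↥N' = finrank k ↥P' + m * μ i := by omega
    have hX : m * e = m * (e - 1) + m := by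
      conv_lhs => rw [show e = (e - 1) + 1 by omega]
      rw [Nat.mul_succ]
    have hA : m * (e - 1 - (i:ℕ)) + m * (i:ℕ) = m * (e - 1) := by
      rw [← Nat.mul_add]
      congr 1
      omega
    have hPK : P' ≤ LinearMap.ker (T ^ (m * (i:ℕ) + 1)) := by
      intro x hx
      exact LinearMap.mem_ker.mpr (hkill1 i x hx)
    have hrange_a : LinearMap.range (T ^ (m * (e - 1 - (i:ℕ)))) ≤ N' := by
      rintro y ⟨x, rfl⟩
      have h := hdown (e - 1 - (i:ℕ)) (by omega) x
      have hfe : (⟨e - (e - 1 - (i:ℕ)), by omega⟩ : Fin (e + 1)) = i.succ := by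
        apply Fin.ext
        simp [Fin.val_succ]
        omega
      rw [hfe] at h
      exact h
    have hTWm : Submodule.map T (LinearMap.range (T ^ (m * (e - 1 - (i:ℕ)))) ⊓ LinearMap.ker (T ^ (m * (i:ℕ) + 1 + 1))) ≤ (LinearMap.range (T ^ (m * (e - 1 - (i:ℕ)))) ⊓ LinearMap.ker (T ^ (m * (i:ℕ) + 1 + 1))) ⊓ LinearMap.ker (T ^ (m * (i:ℕ) + 1)) := by
      rintro y ⟨x, hx, rfl⟩
      have hx1 := (Submodule.mem_inf.mp hx).1
      have hx2 := (Submodule.mem_inf.mp hx).2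
      refine Submodule.mem_inf.mpr ⟨Submodule.mem_inf.mpr ⟨?_, ?_⟩, ?_⟩
      · obtain ⟨u, hu⟩ := hx1
        exact ⟨T u, by rw [← hTcomm, hu]⟩
      · rw [LinearMap.mem_ker, ← hTcomm, LinearMap.mem_ker.mp hx2, map_zero]
      · rw [LinearMap.mem_ker, ← Module.End.mul_apply, ← pow_succ]
        exact LinearMap.mem_ker.mp hx2
    have hWN : (LinearMap.range (T ^ (m * (e - 1 - (i:ℕ)))) ⊓ LinearMap.ker (T ^ (m * (i:ℕ) + 1 + 1))) ≤ N' := le_trans inf_le_left hrange_a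
    have hZW : LinearMap.range (T ^ (p - m)) ⊓ LinearMap.ker T
        ≤ Submodule.map (T ^ (m * (i:ℕ) + 1)) (LinearMap.range (T ^ (m * (e - 1 - (i:ℕ)))) ⊓ LinearMap.ker (T ^ (m * (i:ℕ) + 1 + 1))) := by
      intro z hz
      have hz1 := (Submodule.mem_inf.mp hz).1
      have hz2 := (Submodule.mem_inf.mp hz).2
      obtain ⟨x, rfl⟩ := hz1
      refine ⟨(T ^ (m * (e - 1 - (i:ℕ)))) x, Submodule.mem_inf.mpr ⟨⟨x, rfl⟩, ?_⟩, ?_⟩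
      · rw [LinearMap.mem_ker, ← hpowc, show (m * (i:ℕ) + 1 + 1) + (m * (e - 1 - (i:ℕ))) = 1 + (p - m) by omega,
          hpowc 1 (p - m), pow_one]
        exact LinearMap.mem_ker.mp hz2
      · rw [← hpowc, show (m * (i:ℕ) + 1) + (m * (e - 1 - (i:ℕ))) = p - m by omega]
    have c1 := aux_rn (T ^ (m * (i:ℕ) + 1)) (LinearMap.range (T ^ (m * (e - 1 - (i:ℕ)))) ⊓ LinearMap.ker (T ^ (m * (i:ℕ) + 1 + 1)))
    have c2 := Submodule.finrank_sup_add_finrank_inf_eq (LinearMap.range (T ^ (m * (e - 1 - (i:ℕ)))) ⊓ LinearMap.ker (T ^ (m * (i:ℕ) + 1 + 1))) P'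
    have c3 := Submodule.finrank_sup_add_finrank_inf_eq ((LinearMap.range (T ^ (m * (e - 1 - (i:ℕ)))) ⊓ LinearMap.ker (T ^ (m * (i:ℕ) + 1 + 1))) ⊓ LinearMap.ker (T ^ (m * (i:ℕ) + 1))) P'
    have c4 : (LinearMap.range (T ^ (m * (e - 1 - (i:ℕ)))) ⊓ LinearMap.ker (T ^ (m * (i:ℕ) + 1 + 1))) ⊓ LinearMap.ker (T ^ (m * (i:ℕ) + 1)) ⊓ P' = (LinearMap.range (T ^ (m * (e - 1 - (i:ℕ)))) ⊓ LinearMap.ker (T ^ (m * (i:ℕ) + 1 + 1))) ⊓ P' := by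
      rw [inf_assoc, inf_eq_right.mpr hPK]
    rw [c4] at c3
    have c7 : Submodule.map T ((LinearMap.range (T ^ (m * (e - 1 - (i:ℕ)))) ⊓ LinearMap.ker (T ^ (m * (i:ℕ) + 1 + 1))) ⊔ P') ⊔ P' ≤ ((LinearMap.range (T ^ (m * (e - 1 - (i:ℕ)))) ⊓ LinearMap.ker (T ^ (m * (i:ℕ) + 1 + 1))) ⊓ LinearMap.ker (T ^ (m * (i:ℕ) + 1))) ⊔ P' := by
      rw [Submodule.map_sup, sup_assoc]
      exact sup_le (le_trans hTWm le_sup_left)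
        (le_trans (sup_le (hmapT (F i.castSucc)) le_rfl) le_sup_right)
    have c8 := aux_delta T P' ((LinearMap.range (T ^ (m * (e - 1 - (i:ℕ)))) ⊓ LinearMap.ker (T ^ (m * (i:ℕ) + 1 + 1))) ⊔ P')
    have c9 : ((LinearMap.range (T ^ (m * (e - 1 - (i:ℕ)))) ⊓ LinearMap.ker (T ^ (m * (i:ℕ) + 1 + 1))) ⊔ P') ⊓ Submodule.comap T P' ≤ N' ⊓ Submodule.comap T P' :=
      inf_le_inf_right _ (sup_le hWN hPN)
    have c10 := Submodule.finrank_mono c7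
    have c11 := Submodule.finrank_mono c9
    -- Step E
    have recur : ∀ t : ℕ, finrank k ↥(Submodule.map (T ^ t) N' ⊔ P') + finrank k ↥P'
        = finrank k ↥(Submodule.map (T ^ (t + 1)) N' ⊔ P')
          + finrank k ↥((Submodule.map (T ^ t) N' ⊔ P') ⊓ Submodule.comap T P') := by
      intro t
      have h := aux_delta T P' (Submodule.map (T ^ t) N' ⊔ P')
      have e2 : Submodule.map T (Submodule.map (T ^ t) N' ⊔ P') ⊔ P'
          = Submodule.map (T ^ (t + 1)) N' ⊔ P' := by
        rw [Submodule.map_sup]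
        have e3 : Submodule.map T (Submodule.map (T ^ t) N')
            = Submodule.map (T ^ (t + 1)) N' := by
          rw [← Submodule.map_comp, ← Module.End.mul_eq_comp, ← pow_succ']
        rw [e3, sup_assoc, sup_eq_right.mpr (hmapT (F i.castSucc))]
      rw [e2] at h
      exact h
    have hAmono : ∀ t : ℕ, Submodule.map (T ^ (t + 1)) N' ⊔ P'
        ≤ Submodule.map (T ^ t) N' ⊔ P' := by
      intro t
      apply sup_le _ le_sup_right
      have e3 : Submodule.map (T ^ (t + 1)) N'
          = Submodule.map (T ^ t) (Submodule.map T N') := by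
        rw [← Submodule.map_comp, ← Module.End.mul_eq_comp, ← pow_succ]
      rw [e3]
      exact le_trans (Submodule.map_mono (hmapT (F i.succ))) le_sup_left
    have hAanti : ∀ d t : ℕ, Submodule.map (T ^ (t + d)) N' ⊔ P'
        ≤ Submodule.map (T ^ t) N' ⊔ P' := by
      intro d
      induction d with
      | zero => intro t; exact le_rfl
      | succ d ih =>
        intro t
        rw [show t + (d + 1) = (t + d) + 1 by omega]
        exact le_trans (hAmono (t + d)) (ih t)
    have hA0 : Submodule.map (T ^ (0:ℕ)) N' ⊔ P' = N' := by
      rw [pow_zero, Module.End.one_eq_id, Submodule.map_id, sup_eq_left]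
      exact hPN
    have hAm : Submodule.map (T ^ m) N' ⊔ P' = P' := sup_eq_right.mpr hq1
    have hkm1 : finrank k ↥((Submodule.map (T ^ (m - 1)) N' ⊔ P') ⊓ Submodule.comap T P')
        = finrank k ↥P' + μ i := by
      have h := recur (m - 1)
      rw [show m - 1 + 1 = m by omega, hAm, hq3] at h
      omega
    have hkmono : ∀ t : ℕ, t ≤ m - 1 → finrank k ↥P' + μ i
        ≤ finrank k ↥((Submodule.map (T ^ t) N' ⊔ P') ⊓ Submodule.comap T P') := by
      intro t ht
      rw [← hkm1]
      apply Submodule.finrank_mono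
      apply inf_le_inf_right
      have h := hAanti (m - 1 - t) t
      rw [show t + (m - 1 - t) = m - 1 by omega] at h
      exact h
    have claim : ∀ j : ℕ, j ≤ m - 1 → finrank k ↥P' + (j + 1) * μ i
        ≤ finrank k ↥(Submodule.map (T ^ (m - 1 - j)) N' ⊔ P') := by
      intro j
      induction j with
      | zero =>
        intro _
        rw [Nat.sub_zero, Nat.zero_add, one_mul, hq3]
      | succ j ih =>
        intro hj
        have h := recur (m - 1 - (j + 1))
        rw [show m - 1 - (j + 1) + 1 = m - 1 - j by omega] at h
        have h2 := ih (by omega)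
        have h3 := hkmono (m - 1 - (j + 1)) (by omega)
        have h4 : (j + 1 + 1) * μ i = (j + 1) * μ i + μ i := by ring
        omega
    have hdA1 : finrank k ↥P' + (m - 1) * μ i
        ≤ finrank k ↥(Submodule.map (T ^ (1:ℕ)) N' ⊔ P') := by
      by_cases hm1 : m = 1
      · rw [hm1]
        simp only [Nat.sub_self, Nat.zero_mul, Nat.add_zero]
        exact Submodule.finrank_mono le_sup_right
      · have h := claim (m - 2) (by omega)
        rw [show m - 1 - (m - 2) = 1 by omega, show m - 2 + 1 = m - 1 by omega] at h
        exact h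
    have hrec0 := recur 0
    rw [Nat.zero_add, hA0] at hrec0
    have hmmu : m * μ i = (m - 1) * μ i + μ i := by
      conv_lhs => rw [show m = (m - 1) + 1 by omega]
      rw [Nat.succ_mul]
    have hkappa : finrank k ↥(N' ⊓ Submodule.comap T P') ≤ finrank k ↥P' + μ i := by omega
    -- conclusion
    have hz := hgamma (p - m + 1) (by omega)
    rw [show p - m + 1 - 1 = p - m by omega] at hz
    have hzle : finrank k ↥(LinearMap.range (T ^ (p - m)) ⊓ LinearMap.ker T)
        ≤ finrank k ↥(Submodule.map (T ^ (m * (i:ℕ) + 1)) (LinearMap.range (T ^ (m * (e - 1 - (i:ℕ)))) ⊓ LinearMap.ker (T ^ (m * (i:ℕ) + 1 + 1)))) := Submodule.finrank_mono hZW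
    rw [hz]
    omega
  exact ⟨part1, part2⟩
end
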